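/- Let Ω ⊆ ℂⁿ be an open set, x ∈ Ω, and let f₁, …, f_N : Ω → ℂ be holomorphic functions such that for each j the function fⱼ vanishes to order exactly mⱼ ∈ ℕ at x. Define φ(z) = log(Σ_{j=1}^N |fⱼ(z)|²)^{1/2}. Then liminf_{z→x, z≠x} φ(z)/log‖z−x‖ ≤ min_{1≤j≤N} mⱼ. -/

import Mathlib

/-!
By polarization, the `m`-th Taylor term of `f_j` at `x` is nonzero on the diagonal in some unit
direction `v`, so the one-variable function `t ↦ f_j (x + t v)` has a zero of some order `k ≤ m_j`
at `0`, and `log |f_j (x + t v)| / log |t| → k`. Near `x` we have `log ‖z - x‖ < 0` and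
`φ ≥ log |f_j|`, so along this line `φ(z) / log ‖z - x‖` is eventually at most `k + ε`.
-/

open Filter Topology

section Liminf

variable {α β : Type*} {l : Filter α} {u : α → ℝ} {b : ℝ}

-- `liminf` in `ℝ` is `0` when `u` has no eventual lower bound, hence `0 ≤ b`.
theorem Real.liminf_le_of_frequently_le (hb : 0 ≤ b) (h : ∃ᶠ x in l, u x ≤ b) :
    liminf u l ≤ b := by
  rw [liminf_eq]
  refine Real.sSup_le (fun a ha => ?_) hb
  obtain ⟨x, hxb, hax⟩ := (h.and_eventually ha).exists
  exact hax.trans hxb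

theorem Real.liminf_le_of_tendsto_comp {l' : Filter β} [l'.NeBot] {ψ : β → α} {w : β → ℝ}
    {c : ℝ} (hc : 0 ≤ c) (hψ : Tendsto ψ l' l) (huw : ∀ᶠ t in l', u (ψ t) ≤ w t)
    (hw : Tendsto w l' (𝓝 c)) : liminf u l ≤ c := by
  refine le_of_forall_pos_le_add fun ε hε => Real.liminf_le_of_frequently_le (by positivity) ?_
  have hwε : ∀ᶠ t in l', w t ≤ c + ε := hw.eventually_le_const (by linarith)
  exact hψ.frequently ((huw.and hwε).mono fun t ht => ht.1.trans ht.2).frequently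

end Liminf

section Polarization

variable {𝕜 E F : Type*} [NontriviallyNormedField 𝕜] [NormedAddCommGroup E] [NormedSpace 𝕜 E]
  [NormedAddCommGroup F] [NormedSpace 𝕜 F] [CompleteSpace F] {f : E → F} {x : E} {m : ℕ}

theorem AnalyticAt.exists_iteratedFDeriv_apply_diag_ne_zero [CharZero 𝕜] (hf : AnalyticAt 𝕜 f x)
    (hm : iteratedFDeriv 𝕜 m f x ≠ 0) : ∃ y, iteratedFDeriv 𝕜 m f x (fun _ => y) ≠ 0 := by
  obtain ⟨p, r, hp⟩ := hf
  by_contra! hdiag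
  have hpm : ∀ y, p m (fun _ => y) = 0 := fun y => by
    have h := hp.factorial_smul y m
    rw [hdiag y, ← Nat.cast_smul_eq_nsmul 𝕜] at h
    exact (smul_eq_zero.1 h).resolve_left (Nat.cast_ne_zero.2 m.factorial_ne_zero)
  -- Only diagonal values of the coefficients enter the expansion, so `q` is still a power series
  -- of `f`; but `iteratedFDeriv` is the symmetrization of the whole `m`-th coefficient.
  set q : FormalMultilinearSeries 𝕜 E F := fun k => if k = m then 0 else p k
  have hq_diag : ∀ k y, q k (fun _ => y) = p k (fun _ => y) := fun k y => by
    rcases eq_or_ne k m with rfl | hk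
    · simp [q, hpm]
    · simp only [q, if_neg hk]
  have hq : HasFPowerSeriesOnBall f q x r :=
    { r_le := hp.r_le.trans <| FormalMultilinearSeries.radius_le_of_le fun k => by
        rcases eq_or_ne k m with rfl | hk
        · simp [q]
        · simp only [q, if_neg hk, le_refl]
      r_pos := hp.r_pos
      hasSum := fun hy => by simpa only [hq_diag] using hp.hasSum hy }
  apply hm
  ext v
  simp [hq.iteratedFDeriv_eq_sum_of_completeSpace, q]

end Polarization

section Line

variable {𝕜 E F : Type*} [NontriviallyNormedField 𝕜] [NormedAddCommGroup E] [NormedSpace 𝕜 E]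
  [NormedAddCommGroup F] [NormedSpace 𝕜 F] {f : E → F} {x : E}

theorem HasFPowerSeriesAt.comp_line {p : FormalMultilinearSeries 𝕜 E F}
    (hf : HasFPowerSeriesAt f p x) (v : E) :
    HasFPowerSeriesAt (fun t : 𝕜 => f (x + t • v))
      (p.compContinuousLinearMap (ContinuousLinearMap.toSpanSingleton 𝕜 v)) 0 := by
  have h := hf.comp_sub (-x)
  rw [add_neg_cancel, ← map_zero (ContinuousLinearMap.toSpanSingleton 𝕜 v)] at h
  simpa [Function.comp_def, add_comm x] using h.compContinuousLinearMap

variable [CompleteSpace F]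

theorem AnalyticAt.iteratedDeriv_comp_line (hf : AnalyticAt 𝕜 f x) (v : E) (k : ℕ) :
    iteratedDeriv k (fun t : 𝕜 => f (x + t • v)) 0 = iteratedFDeriv 𝕜 k f x (fun _ => v) := by
  obtain ⟨p, r, hp⟩ := hf
  obtain ⟨s, hs⟩ := hp.hasFPowerSeriesAt.comp_line v
  rw [iteratedDeriv_eq_iteratedFDeriv, ← hs.factorial_smul, ← hp.factorial_smul]
  simp only [FormalMultilinearSeries.compContinuousLinearMap_apply, Function.comp_def,
    ContinuousLinearMap.toSpanSingleton_apply, one_smul]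

theorem AnalyticAt.analyticOrderAt_comp_line_le [CharZero 𝕜] (hf : AnalyticAt 𝕜 f x) {v : E}
    {m : ℕ} (hv : iteratedFDeriv 𝕜 m f x (fun _ => v) ≠ 0) :
    analyticOrderAt (fun t : 𝕜 => f (x + t • v)) 0 ≤ m := by
  have hg : AnalyticAt 𝕜 (fun t : 𝕜 => f (x + t • v)) 0 := hf.comp_of_eq (by fun_prop) (by simp)
  by_contra! hlt
  rw [← hf.iteratedDeriv_comp_line] at hv
  exact hv <| (natCast_le_analyticOrderAt_iff_iteratedDeriv_eq_zero hg).1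
    (Order.add_one_le_of_lt hlt) m (Nat.lt_succ_self m)

end Line

theorem tendsto_log_norm_sub_nhdsNE_atBot {E : Type*} [NormedAddCommGroup E] (a : E) :
    Tendsto (fun z => Real.log ‖z - a‖) (𝓝[≠] a) atBot :=
  Real.tendsto_log_nhdsGT_zero.comp (tendsto_norm_sub_self_nhdsNE a)

theorem AnalyticAt.tendsto_log_norm_div_log_norm_sub {𝕜 F : Type*} [NontriviallyNormedField 𝕜]
    [NormedAddCommGroup F] [NormedSpace 𝕜 F] {g : 𝕜 → F} {z₀ : 𝕜} {k : ℕ}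
    (hg : AnalyticAt 𝕜 g z₀) (hk : analyticOrderAt g z₀ = k) :
    Tendsto (fun z => Real.log ‖g z‖ / Real.log ‖z - z₀‖) (𝓝[≠] z₀) (𝓝 k) := by
  obtain ⟨h, hh, hh₀, hgh⟩ := hg.analyticOrderAt_eq_natCast.1 hk
  have hlog := tendsto_log_norm_sub_nhdsNE_atBot z₀
  have hh_log : Tendsto (fun z => Real.log ‖h z‖) (𝓝[≠] z₀) (𝓝 (Real.log ‖h z₀‖)) :=
    (hh.continuousAt.norm.log (norm_ne_zero_iff.2 hh₀)).tendsto.mono_left nhdsWithin_le_nhds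
  have hlim := (hh_log.div_atBot hlog).const_add (k : ℝ)
  rw [add_zero] at hlim
  refine hlim.congr' ?_
  filter_upwards [nhdsWithin_le_nhds hgh, nhdsWithin_le_nhds (hh.continuousAt.eventually_ne hh₀),
    hlog.eventually_lt_atBot 0, self_mem_nhdsWithin] with z hgz hhz hz hne
  have hz₀ : ‖z - z₀‖ ≠ 0 := norm_ne_zero_iff.2 (sub_ne_zero.2 hne)
  rw [hgz, norm_smul, norm_pow, Real.log_mul (pow_ne_zero k hz₀) (norm_ne_zero_iff.2 hhz),
    Real.log_pow, add_div, mul_div_cancel_right₀ _ hz.ne, add_comm]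

theorem tendsto_add_smul_nhdsNE {𝕜 E : Type*} [NontriviallyNormedField 𝕜] [NormedAddCommGroup E]
    [NormedSpace 𝕜 E] (x : E) {v : E} (hv : v ≠ 0) :
    Tendsto (fun t : 𝕜 => x + t • v) (𝓝[≠] 0) (𝓝[≠] x) := by
  refine tendsto_nhdsWithin_of_tendsto_nhds_of_eventually_within _ ?_ ?_
  · have hcont : Continuous fun t : 𝕜 => x + t • v := by fun_prop
    simpa using (hcont.tendsto 0).mono_left nhdsWithin_le_nhds
  · filter_upwards [self_mem_nhdsWithin] with t ht
    simpa [hv] using ht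

theorem ContinuousMultilinearMap.exists_norm_eq_one_apply_diag_ne_zero {𝕜 E F : Type*} [RCLike 𝕜]
    [NormedAddCommGroup E] [NormedSpace 𝕜 E] [Nontrivial E] [NormedAddCommGroup F]
    [NormedSpace 𝕜 F] {m : ℕ} (M : ContinuousMultilinearMap 𝕜 (fun _ : Fin m => E) F) {y : E}
    (hy : M (fun _ => y) ≠ 0) : ∃ v, ‖v‖ = 1 ∧ M (fun _ => v) ≠ 0 := by
  obtain ⟨w, hw₀, hw⟩ : ∃ w ≠ 0, M (fun _ => w) ≠ 0 := by
    rcases eq_or_ne y 0 with rfl | hy₀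
    · obtain ⟨w, hw₀⟩ := exists_ne (0 : E)
      rcases m.eq_zero_or_pos with rfl | hm
      · exact ⟨w, hw₀, by convert hy using 2⟩
      · exact absurd (M.map_coord_zero ⟨0, hm⟩ rfl) hy
    · exact ⟨y, hy₀, hy⟩
  refine ⟨(‖w‖⁻¹ : 𝕜) • w, norm_smul_inv_norm hw₀, ?_⟩
  have h := M.map_smul_univ (fun _ => (‖w‖⁻¹ : 𝕜)) (fun _ => w)
  simp only [Finset.prod_const, Finset.card_univ, Fintype.card_fin] at h
  rw [h]
  exact smul_ne_zero (by simp [hw₀]) hw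

theorem liminf_div_log_norm_sub_le_of_iteratedFDeriv_ne_zero {𝕜 E F : Type*} [RCLike 𝕜]
    [NormedAddCommGroup E] [NormedSpace 𝕜 E] [NormedAddCommGroup F] [NormedSpace 𝕜 F]
    [CompleteSpace F] {f : E → F} {x : E} {m : ℕ} {φ : E → ℝ} (hf : AnalyticAt 𝕜 f x)
    (hm : iteratedFDeriv 𝕜 m f x ≠ 0) (hφ : ∀ z, f z ≠ 0 → Real.log ‖f z‖ ≤ φ z) :
    liminf (fun z => φ z / Real.log ‖z - x‖) (𝓝[≠] x) ≤ m := by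
  rcases subsingleton_or_nontrivial E with _ | _
  · have hbot : 𝓝[≠] x = ⊥ := by
      rw [← nhdsWithin_empty x]
      congr 1
      exact Set.eq_empty_of_forall_notMem fun z hz => hz (Subsingleton.elim z x)
    simp [hbot, liminf_eq]
  obtain ⟨y, hy⟩ := hf.exists_iteratedFDeriv_apply_diag_ne_zero hm
  obtain ⟨v, hv, hfv⟩ := (iteratedFDeriv 𝕜 m f x).exists_norm_eq_one_apply_diag_ne_zero hy
  set g := fun t : 𝕜 => f (x + t • v)
  have hg : AnalyticAt 𝕜 g 0 := hf.comp_of_eq (by fun_prop) (by simp)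
  have hgm := hf.analyticOrderAt_comp_line_le hfv
  obtain ⟨k, hk⟩ := ENat.ne_top_iff_exists.1 (ne_top_of_le_ne_top (ENat.natCast_ne_top m) hgm)
  have hkm : k ≤ m := by exact_mod_cast hk ▸ hgm
  have hg_ne : ∀ᶠ t in 𝓝[≠] 0, g t ≠ 0 := hg.eventually_eq_zero_or_eventually_ne_zero.resolve_left
    fun h => ENat.natCast_ne_top k (hk.trans (analyticOrderAt_eq_top.2 h))
  have hline := tendsto_add_smul_nhdsNE x (𝕜 := 𝕜) (norm_ne_zero_iff.1 (hv ▸ one_ne_zero))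
  refine (Real.liminf_le_of_tendsto_comp k.cast_nonneg hline ?_
    (hg.tendsto_log_norm_div_log_norm_sub hk.symm)).trans (by exact_mod_cast hkm)
  filter_upwards [hg_ne, (tendsto_log_norm_sub_nhdsNE_atBot (0 : 𝕜)).eventually_lt_atBot 0]
    with t hgt hlog
  have hdist : ‖x + t • v - x‖ = ‖t - 0‖ := by simp [norm_smul, hv]
  rw [hdist]
  exact div_le_div_of_nonpos_of_le hlog.le (hφ _ hgt)

theorem lelong_number_le_min_order_general
    {n N : ℕ} (hN : 0 < N)
    (Ω : Set (EuclideanSpace ℂ (Fin n)))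
    (x : EuclideanSpace ℂ (Fin n)) (hx : x ∈ Ω)
    (f : Fin N → EuclideanSpace ℂ (Fin n) → ℂ) (m : Fin N → ℕ)
    (hf : ∀ j, AnalyticOnNhd ℂ (f j) Ω)
    (hord : ∀ j, (∀ k < m j, iteratedFDeriv ℂ k (f j) x = 0) ∧
      iteratedFDeriv ℂ (m j) (f j) x ≠ 0) :
    Filter.liminf
      (fun z => Real.log (Real.sqrt (∑ j, ‖f j z‖ ^ 2)) / Real.log ‖z - x‖)
      (𝓝[≠] x) ≤ ⨅ j, (m j : ℝ) := by
  have : Nonempty (Fin N) := ⟨⟨0, hN⟩⟩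
  refine le_ciInf fun j =>
    liminf_div_log_norm_sub_le_of_iteratedFDeriv_ne_zero (hf j x hx) (hord j).2 fun z hz => ?_
  refine Real.log_le_log (norm_pos_iff.2 hz) (Real.le_sqrt_of_sq_le ?_)
  exact Finset.single_le_sum (f := fun i => ‖f i z‖ ^ 2) (fun i _ => by positivity)
    (Finset.mem_univ j)

/-- Upper bound for the Lelong number: for holomorphic `f₁, …, f_N` on an open `Ω ⊆ ℂⁿ`
vanishing to order exactly `mⱼ` at `x ∈ Ω`, the Lelong number at `x` of
`φ(z) = log (∑ⱼ |fⱼ(z)|²)^{1/2}` is at most `min_j mⱼ`. -/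
theorem lelong_number_le_min_order
    {n N : ℕ} (hN : 0 < N)
    (Ω : Set (EuclideanSpace ℂ (Fin n))) (hΩ : IsOpen Ω)
    (x : EuclideanSpace ℂ (Fin n)) (hx : x ∈ Ω)
    (f : Fin N → EuclideanSpace ℂ (Fin n) → ℂ) (m : Fin N → ℕ)
    (hf : ∀ j, AnalyticOnNhd ℂ (f j) Ω)
    (hord : ∀ j, (∀ k < m j, iteratedFDeriv ℂ k (f j) x = 0) ∧
      iteratedFDeriv ℂ (m j) (f j) x ≠ 0) :
    Filter.liminf
      (fun z => Real.log (Real.sqrt (∑ j, ‖f j z‖ ^ 2)) / Real.log ‖z - x‖)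
      (𝓝[≠] x) ≤ ⨅ j, (m j : ℝ) :=
  lelong_number_le_min_order_general hN Ω x hx f m hf hord
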